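/- arXiv:0711.4175 — 2 statements merged into one kernel-verified Lean document; each statement's English description precedes it below -/
import Mathlib

section
/- For the bidirected pentagon C5 and every integer s ≥ 2, the entropy E(C5,s) equals 5/2 if and only if s is a perfect square; consequently the general entropy of the pentagon is E(C5) = 5/2. -/
open Finset

/-! ## Basic setup: directed graphs, guessing games, entropy (Riis, "Graph Entropy,
Network Coding and Guessing games"). -/

/-- The set `N⁻(j)` of in-neighbours of a vertex `j` in the directed graph given by
the edge relation `E` (an edge `(i,j)` is `E i j`). -/
def inNbr {V : Type*} [Fintype V] (E : V → V → Prop) [DecidableRel E] (j : V) : Finset V :=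
  Finset.univ.filter (fun i => E i j)

/-- `p` is a probability distribution on `V → A`. -/
def IsProbDist {V A : Type*} [Fintype V] [DecidableEq V] [Fintype A] (p : (V → A) → ℝ) : Prop :=
  (∀ x, 0 ≤ p x) ∧ ∑ x : V → A, p x = 1

/-- The marginal probability, under `p`, that the coordinates in `S` agree with `y`. -/
noncomputable def marginalPMF {V A : Type*} [Fintype V] [DecidableEq V] [Fintype A] [DecidableEq A]
    (p : (V → A) → ℝ) (S : Finset V) (y : ↥S → A) : ℝ :=
  ∑ x : V → A, if ∀ i : ↥S, x i.1 = y i then p x else 0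

/-- `Hent s p S` : the base-`s` Shannon entropy of the marginal of `p` on the
coordinates in `S` (using `Real.negMulLog`, so the convention `0·log(1/0) = 0` holds). -/
noncomputable def Hent {V A : Type*} [Fintype V] [DecidableEq V] [Fintype A] [DecidableEq A]
    (s : ℕ) (p : (V → A) → ℝ) (S : Finset V) : ℝ :=
  (∑ y : ↥S → A, Real.negMulLog (marginalPMF p S y)) / Real.log s

/-- `p` satisfies the information constraints of the graph: `H(j | N⁻(j)) = 0` for every
vertex `j`, where `H(X | Y) = H(X ∪ Y) − H(Y)`. -/
def InfoConstraints {V A : Type*} [Fintype V] [DecidableEq V] [Fintype A] [DecidableEq A]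
    (E : V → V → Prop) [DecidableRel E] (s : ℕ) (p : (V → A) → ℝ) : Prop :=
  ∀ j : V, Hent s p (insert j (inNbr E j)) - Hent s p (inNbr E j) = 0

/-- The (private) entropy `E(G,s)` of the graph over an alphabet of size `s`:
the sup of `H_p(V)` over probability distributions on `A^V` (`A = Fin s`)
satisfying the information constraints of the graph. -/
noncomputable def graphEntropy {V : Type*} [Fintype V] [DecidableEq V]
    (E : V → V → Prop) [DecidableRel E] (s : ℕ) : ℝ :=
  sSup {h : ℝ | ∃ p : (V → Fin s) → ℝ,
    IsProbDist p ∧ InfoConstraints E s p ∧ h = Hent s p Finset.univ}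

/-- The general entropy `E(G) = sup_{s ≥ 2} E(G,s)`. -/
noncomputable def genEntropy {V : Type*} [Fintype V] [DecidableEq V]
    (E : V → V → Prop) [DecidableRel E] : ℝ :=
  sSup {h : ℝ | ∃ s : ℕ, 2 ≤ s ∧ h = graphEntropy E s}

/-- A guessing strategy: each vertex `j` guesses a value `g j x` which may only depend on
the values `x i` for in-neighbours `i` of `j`. -/
def IsStrategy {V A : Type*} (E : V → V → Prop) (g : V → (V → A) → A) : Prop :=
  ∀ j x y, (∀ i, E i j → x i = y i) → g j x = g j y

/-- The set of assignments at which all players guess correctly. -/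
def correctSet {V A : Type*} [Fintype V] [DecidableEq V] [Fintype A] [DecidableEq A]
    (g : V → (V → A) → A) : Finset (V → A) :=
  Finset.univ.filter (fun x => ∀ j, g j x = x j)

/-- The maximal number of assignments at which all players guess correctly,
over all guessing strategies (over the alphabet `Fin s`). -/
noncomputable def maxCorrect {V : Type*} [Fintype V] [DecidableEq V]
    (E : V → V → Prop) [DecidableRel E] (s : ℕ) : ℕ :=
  sSup {m : ℕ | ∃ g : V → (V → Fin s) → Fin s, IsStrategy E g ∧ m = (correctSet g).card}

/-- The maximal probability (with `x` uniform on `A^V`) that all players guess correctly. -/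
noncomputable def maxProb {V : Type*} [Fintype V] [DecidableEq V]
    (E : V → V → Prop) [DecidableRel E] (s : ℕ) : ℝ :=
  (maxCorrect E s : ℝ) / (s : ℝ) ^ Fintype.card V

/-- The guessing number `g(G,s)`: the unique `α` with maximal success probability
`(1/s)^(n−α)`, i.e. `α = n + log_s (maximal probability)`. -/
noncomputable def guessingNumber {V : Type*} [Fintype V] [DecidableEq V]
    (E : V → V → Prop) [DecidableRel E] (s : ℕ) : ℝ :=
  (Fintype.card V : ℝ) + Real.logb s (maxProb E s)

/-- The general guessing number `g(G) = sup_{s ≥ 2} g(G,s)`. -/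
noncomputable def genGuessing {V : Type*} [Fintype V] [DecidableEq V]
    (E : V → V → Prop) [DecidableRel E] : ℝ :=
  sSup {h : ℝ | ∃ s : ℕ, 2 ≤ s ∧ h = guessingNumber E s}

/-! ## Entropy-like functions -/

/-- An S-entropy-like function: `f ∅ = 0`, monotone and submodular (the polymatroidal
axioms, equivalently Shannon's information inequalities). -/
def SEntLike {U : Type*} [DecidableEq U] (f : Finset U → ℝ) : Prop :=
  f ∅ = 0 ∧ (∀ X Y, X ⊆ Y → f X ≤ f Y) ∧ ∀ X Y, f (X ∩ Y) + f (X ∪ Y) ≤ f X + f Y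

/-- Mutual information `I_f(X;Y|Z)` of an entropy-like function. -/
def mutI {U : Type*} [DecidableEq U] (f : Finset U → ℝ) (X Y Z : Finset U) : ℝ :=
  f (X ∪ Z) + f (Y ∪ Z) - f (X ∪ Y ∪ Z) - f Z

/-- A Zhang–Yeung entropy-like function: S-entropy-like and satisfying the ZY
non-Shannon information inequality for all `A B C D`. -/
def ZYEntLike {U : Type*} [DecidableEq U] (f : Finset U → ℝ) : Prop :=
  SEntLike f ∧ ∀ A B C D : Finset U,
    2 * mutI f C D ∅ ≤ mutI f A B ∅ + mutI f A (C ∪ D) ∅ + 3 * mutI f C D A + mutI f C D B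

/-- `f` satisfies the information constraints of the graph:
`f(N⁻(j) ∪ {j}) = f(N⁻(j))` for every vertex `j`. -/
def FConstraints {V : Type*} [Fintype V] [DecidableEq V]
    (E : V → V → Prop) [DecidableRel E] (f : Finset V → ℝ) : Prop :=
  ∀ j : V, f (insert j (inNbr E j)) = f (inNbr E j)

/-- The S-entropy `E_S(G)`: the maximal value of `f(V)` over normalized S-entropy-like
functions satisfying the information constraints of `G`. -/
noncomputable def SEnt {V : Type*} [Fintype V] [DecidableEq V]
    (E : V → V → Prop) [DecidableRel E] : ℝ :=
  sSup {h : ℝ | ∃ f : Finset V → ℝ,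
    SEntLike f ∧ (∀ j : V, f {j} ≤ 1) ∧ FConstraints E f ∧ h = f Finset.univ}

/-- The ZY-entropy `E_ZY(G)`. -/
noncomputable def ZYEnt {V : Type*} [Fintype V] [DecidableEq V]
    (E : V → V → Prop) [DecidableRel E] : ℝ :=
  sSup {h : ℝ | ∃ f : Finset V → ℝ,
    ZYEntLike f ∧ (∀ j : V, f {j} ≤ 1) ∧ FConstraints E f ∧ h = f Finset.univ}

/-! ## Acyclicity -/

/-- The subgraph induced on `S` is acyclic: no directed cycle within `S`. -/
def AcyclicOn {V : Type*} (E : V → V → Prop) (S : Finset V) : Prop :=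
  ∀ v ∈ S, ¬ Relation.TransGen (fun a b => a ∈ S ∧ b ∈ S ∧ E a b) v v

/-- The acyclic independence number: the maximal size of a vertex set inducing an
acyclic subgraph. -/
noncomputable def acycIndepNum {V : Type*} [Fintype V] (E : V → V → Prop) : ℕ :=
  sSup {k : ℕ | ∃ S : Finset V, AcyclicOn E S ∧ k = S.card}

/-! ## Index codes -/

/-- An index code protocol: a broadcast map `Φ` together with decoding functions `d j`
(depending only on the in-neighbour values and the broadcast message) recovering `x j`. -/
def IsIndexCode {V A W : Type*} (E : V → V → Prop)
    (Φ : (V → A) → W) (d : V → (V → A) → W → A) : Prop :=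
  (∀ (j : V) (x y : V → A) (w : W), (∀ i, E i j → x i = y i) → d j x w = d j y w) ∧
  ∀ (x : V → A) (j : V), d j x (Φ x) = x j

/-- The length `log_s |Φ(A^V)|` of an index code protocol. -/
noncomputable def protocolLength {V A W : Type*} [Fintype V] [DecidableEq V] [Fintype A]
    [Fintype W] [DecidableEq W] (s : ℕ) (Φ : (V → A) → W) : ℝ :=
  Real.logb s ((Finset.univ.image Φ).card)

/-- The base-`s` entropy of the broadcast message `Φ(x)` for `x` uniform on `A^V`. -/
noncomputable def protocolEntropy {V A W : Type*} [Fintype V] [DecidableEq V] [Fintype A]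
    [DecidableEq A] [Fintype W] [DecidableEq W] (s : ℕ) (Φ : (V → A) → W) : ℝ :=
  (∑ w : W, Real.negMulLog
    (((Finset.univ.filter (fun x : V → A => Φ x = w)).card : ℝ) / (s : ℝ) ^ Fintype.card V))
    / Real.log s

/-- `i(G,s)`: the minimal length of an index code for `G` over `Fin s`. -/
noncomputable def indexCodeLen {V : Type*} [Fintype V] [DecidableEq V]
    (E : V → V → Prop) [DecidableRel E] (s : ℕ) : ℝ :=
  sInf {h : ℝ | ∃ (W : Type) (iW : Fintype W) (dW : DecidableEq W)
    (Φ : (V → Fin s) → W) (d : V → (V → Fin s) → W → Fin s),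
    IsIndexCode E Φ d ∧ h = @protocolLength V (Fin s) W _ _ _ iW dW s Φ}

/-- `i_entro(G,s)`: the minimal entropy of an index code for `G` over `Fin s`. -/
noncomputable def indexCodeEntro {V : Type*} [Fintype V] [DecidableEq V]
    (E : V → V → Prop) [DecidableRel E] (s : ℕ) : ℝ :=
  sInf {h : ℝ | ∃ (W : Type) (iW : Fintype W) (dW : DecidableEq W)
    (Φ : (V → Fin s) → W) (d : V → (V → Fin s) → W → Fin s),
    IsIndexCode E Φ d ∧ h = @protocolEntropy V (Fin s) W _ _ _ _ iW dW s Φ}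

/-- The information constraints on `V ∪ {w}` (`w = none`) used to define the S/ZY-minimal
index code: `f(N⁻(j) ∪ {w} ∪ {j}) = f(N⁻(j) ∪ {w})` for each `j`, `f(V ∪ {w}) = f(V)`
and `f(V) = n`. -/
def WConstraints {V : Type*} [Fintype V] [DecidableEq V]
    (E : V → V → Prop) [DecidableRel E] (f : Finset (Option V) → ℝ) : Prop :=
  (∀ j : V, f (insert (some j) (insert none ((inNbr E j).image some)))
      = f (insert none ((inNbr E j).image some))) ∧
  f (insert none ((Finset.univ : Finset V).image some))
      = f ((Finset.univ : Finset V).image some) ∧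
  f ((Finset.univ : Finset V).image some) = (Fintype.card V : ℝ)

/-- The S-minimal index code `i_S(G)`. -/
noncomputable def iS {V : Type*} [Fintype V] [DecidableEq V]
    (E : V → V → Prop) [DecidableRel E] : ℝ :=
  sInf {h : ℝ | ∃ f : Finset (Option V) → ℝ,
    SEntLike f ∧ (∀ j : V, f {some j} ≤ 1) ∧ WConstraints E f ∧ h = f {none}}

/-- The ZY-minimal index code `i_ZY(G)`. -/
noncomputable def iZY {V : Type*} [Fintype V] [DecidableEq V]
    (E : V → V → Prop) [DecidableRel E] : ℝ :=
  sInf {h : ℝ | ∃ f : Finset (Option V) → ℝ,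
    ZYEntLike f ∧ (∀ j : V, f {some j} ≤ 1) ∧ WConstraints E f ∧ h = f {none}}

/-! ## The bidirected pentagon `C5` -/

/-- The pentagon with bidirected edges: vertices `Fin 5`, edges between cyclically
adjacent vertices. -/
def E5 : Fin 5 → Fin 5 → Prop := fun i j => (i.1 + 1) % 5 = j.1 ∨ (j.1 + 1) % 5 = i.1

instance : DecidableRel E5 := fun i j => by unfold E5; infer_instance

/-!
Entropy of coordinate sets is a polymatroid, and the information constraints hold exactly when,
on the support, every vertex value is a function of its in-neighbour values. Such supports are
the winning sets of guessing strategies, so `E(G,s) = log_s M` with `M` the size of a largest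
winning set, attained by the uniform distribution on it. For the pentagon, submodularity and the
constraints give `2 H(V) ≤ Σ_j H(j) ≤ 5`, hence `M² ≤ s⁵`; equality forces `s` to be a square,
and over the alphabet `[t]²` the configurations `x_j = (a_{j-1}, a_j)` give `M = t⁵`.
-/

open Finset Real

section MapEntropy

variable {Ω β γ δ : Type*} [Fintype Ω] [DecidableEq β] [DecidableEq γ] [DecidableEq δ]
  {p : Ω → ℝ} {F : Ω → β} {G : Ω → γ} {H : Ω → δ}

noncomputable def fiberMass (p : Ω → ℝ) (F : Ω → β) (ω : Ω) : ℝ :=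
  ∑ ω', if F ω' = F ω then p ω' else 0

/-- The Shannon entropy, in nats, of `F` as a random variable on `(Ω, p)`. -/
noncomputable def mapEntropy (p : Ω → ℝ) (F : Ω → β) : ℝ :=
  -∑ ω, p ω * log (fiberMass p F ω)

theorem fiberMass_nonneg (hp : ∀ ω, 0 ≤ p ω) (F : Ω → β) (ω : Ω) : 0 ≤ fiberMass p F ω :=
  sum_nonneg fun ω' _ => by split_ifs <;> simp [hp ω']

theorem le_fiberMass (hp : ∀ ω, 0 ≤ p ω) (F : Ω → β) (ω : Ω) : p ω ≤ fiberMass p F ω := by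
  simpa [fiberMass] using single_le_sum (f := fun ω' => if F ω' = F ω then p ω' else 0)
    (fun ω' _ => by split_ifs <;> simp [hp ω']) (mem_univ ω)

theorem fiberMass_pos (hp : ∀ ω, 0 ≤ p ω) (F : Ω → β) {ω : Ω} (hω : p ω ≠ 0) :
    0 < fiberMass p F ω :=
  (lt_of_le_of_ne (hp ω) hω.symm).trans_le (le_fiberMass hp F ω)

theorem fiberMass_congr (hFG : ∀ ω ω', F ω = F ω' ↔ G ω = G ω') (ω : Ω) :
    fiberMass p F ω = fiberMass p G ω :=
  sum_congr rfl fun ω' _ => by rw [if_congr (hFG ω' ω) rfl rfl]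

theorem fiberMass_eq_of_eq {ω ω' : Ω} (h : F ω = F ω') : fiberMass p F ω = fiberMass p F ω' := by
  simp only [fiberMass, h]

theorem fiberMass_le_of_factor (hp : ∀ ω, 0 ≤ p ω) (hFH : ∀ ω ω', F ω = F ω' → H ω = H ω')
    (ω : Ω) : fiberMass p F ω ≤ fiberMass p H ω :=
  sum_le_sum fun ω' _ => by
    by_cases h : F ω' = F ω
    · simp [h, hFH _ _ h]
    · simp only [h, if_false]; split_ifs <;> simp [hp ω']

theorem fiberMass_eq_iff_of_factor (hp : ∀ ω, 0 ≤ p ω) (hFH : ∀ ω ω', F ω = F ω' → H ω = H ω')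
    (ω : Ω) : fiberMass p F ω = fiberMass p H ω ↔
      ∀ ω', p ω' ≠ 0 → H ω' = H ω → F ω' = F ω := by
  have hterm : ∀ ω', 0 ≤ (if H ω' = H ω then p ω' else 0) - (if F ω' = F ω then p ω' else 0) := by
    intro ω'
    by_cases h : F ω' = F ω
    · simp [h, hFH _ _ h]
    · simp only [h, if_false, sub_zero]; split_ifs <;> simp [hp ω']
  rw [eq_comm, ← sub_eq_zero, fiberMass, fiberMass, ← sum_sub_distrib,
    sum_eq_zero_iff_of_nonneg fun ω' _ => hterm ω']
  refine forall_congr' fun ω' => ?_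
  by_cases hF : F ω' = F ω
  · simp [hF, hFH _ _ hF]
  · by_cases hH : H ω' = H ω <;> simp [hF, hH]

theorem sum_negMulLog_pushforward_eq_mapEntropy [Fintype β] (p : Ω → ℝ) (F : Ω → β) :
    ∑ b, negMulLog (∑ ω, if F ω = b then p ω else 0) = mapEntropy p F := by
  rw [mapEntropy, ← sum_fiberwise univ F, ← sum_neg_distrib]
  refine sum_congr rfl fun b _ => ?_
  have hfiber : ∀ ω ∈ univ.filter (F · = b), p ω * log (fiberMass p F ω) =
      p ω * log (∑ ω', if F ω' = b then p ω' else 0) := fun ω hω => by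
    rw [fiberMass, (mem_filter.1 hω).2]
  rw [sum_congr rfl hfiber, ← sum_mul, sum_filter, negMulLog, neg_mul]

theorem mapEntropy_congr (hFG : ∀ ω ω', F ω = F ω' ↔ G ω = G ω') :
    mapEntropy p F = mapEntropy p G := by
  simp only [mapEntropy, fiberMass_congr hFG]

theorem mapEntropy_eq_zero_of_const (hp : ∑ ω, p ω = 1) (hF : ∀ ω ω', F ω = F ω') :
    mapEntropy p F = 0 := by
  have hmass : ∀ ω, fiberMass p F ω = 1 := fun ω => by
    rw [fiberMass, ← hp]
    exact sum_congr rfl fun ω' _ => if_pos (hF ω' ω)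
  simp [mapEntropy, hmass]

theorem mapEntropy_id [DecidableEq Ω] : mapEntropy p id = ∑ ω, negMulLog (p ω) := by
  simp [mapEntropy, fiberMass, negMulLog]

theorem mapEntropy_le_of_factor (hp : ∀ ω, 0 ≤ p ω) (hFH : ∀ ω ω', F ω = F ω' → H ω = H ω') :
    mapEntropy p H ≤ mapEntropy p F := by
  refine neg_le_neg (sum_le_sum fun ω _ => ?_)
  rcases eq_or_ne (p ω) 0 with h | h
  · simp [h]
  · exact mul_le_mul_of_nonneg_left (log_le_log (fiberMass_pos hp F h)
      (fiberMass_le_of_factor hp hFH ω)) (hp ω)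

theorem mapEntropy_eq_iff_of_factor (hp : ∀ ω, 0 ≤ p ω) (hFH : ∀ ω ω', F ω = F ω' → H ω = H ω') :
    mapEntropy p F = mapEntropy p H ↔
      ∀ ω ω', p ω ≠ 0 → p ω' ≠ 0 → H ω = H ω' → F ω = F ω' := by
  have hterm : ∀ ω, 0 ≤ p ω * (log (fiberMass p H ω) - log (fiberMass p F ω)) := by
    intro ω
    rcases eq_or_ne (p ω) 0 with h | h
    · simp [h]
    · exact mul_nonneg (hp ω) (sub_nonneg.2 (log_le_log (fiberMass_pos hp F h)
        (fiberMass_le_of_factor hp hFH ω)))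
  have hdiff : mapEntropy p F - mapEntropy p H =
      ∑ ω, p ω * (log (fiberMass p H ω) - log (fiberMass p F ω)) := by
    simp only [mapEntropy, mul_sub, sum_sub_distrib]; ring
  rw [← sub_eq_zero, hdiff, sum_eq_zero_iff_of_nonneg fun ω _ => hterm ω]
  refine ⟨fun h ω ω' hω hω' hH => ?_, fun h ω _ => ?_⟩
  · have hlog := (mul_eq_zero.1 (h ω' (mem_univ _))).resolve_left hω'
    have hmass := log_injOn_pos (fiberMass_pos hp H hω') (fiberMass_pos hp F hω')
      (sub_eq_zero.1 hlog)
    exact (fiberMass_eq_iff_of_factor hp hFH ω').1 hmass.symm ω hω hH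
  · rcases eq_or_ne (p ω) 0 with hω | hω
    · simp [hω]
    · rw [(fiberMass_eq_iff_of_factor hp hFH ω).2 fun ω' hω' hH => h ω' ω hω' hω hH, sub_self,
        mul_zero]

/-- An `F`-fibre meets a `G`-fibre in at most one fibre of `(F, G)`, on which
`p / fiberMass p (F, G)` sums to at most `1`. -/
theorem sum_ite_div_fiberMass_pair_le (hF : ∀ ω ω', F ω = F ω' → H ω = H ω')
    (hG : ∀ ω ω', G ω = G ω' → H ω = H ω') (ω₁ ω₂ : Ω) :
    ∑ ω, (if G ω = G ω₁ ∧ F ω = F ω₂ then p ω / fiberMass p (fun ω => (F ω, G ω)) ω else 0) ≤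
      if H ω₂ = H ω₁ then 1 else 0 := by
  by_cases hex : ∃ ω₀, G ω₀ = G ω₁ ∧ F ω₀ = F ω₂
  · obtain ⟨ω₀, hG₀, hF₀⟩ := hex
    have hcell : ∀ ω, (G ω = G ω₁ ∧ F ω = F ω₂) ↔ (F ω, G ω) = (F ω₀, G ω₀) := by
      intro ω; rw [Prod.ext_iff, hG₀, hF₀, and_comm]
    rw [if_pos ((hF _ _ hF₀).symm.trans (hG _ _ hG₀))]
    calc ∑ ω, (if G ω = G ω₁ ∧ F ω = F ω₂ then p ω / fiberMass p (fun ω => (F ω, G ω)) ω else 0)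
        = (∑ ω, if (F ω, G ω) = (F ω₀, G ω₀) then p ω else 0) /
            fiberMass p (fun ω => (F ω, G ω)) ω₀ := by
          rw [sum_div]
          refine sum_congr rfl fun ω _ => ?_
          simp only [hcell]
          split_ifs with h
          · rw [fiberMass_eq_of_eq h]
          · rw [zero_div]
      _ ≤ 1 := div_self_le_one _
  · rw [sum_eq_zero fun ω _ => if_neg fun h => hex ⟨ω, h⟩]
    split_ifs <;> norm_num

theorem sum_ite_mul_fiberMass_le (hp : ∀ ω, 0 ≤ p ω) (hF : ∀ ω ω', F ω = F ω' → H ω = H ω')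
    (hG : ∀ ω ω', G ω = G ω' → H ω = H ω') (ω₁ : Ω) :
    ∑ ω, (if G ω = G ω₁ then
      p ω / fiberMass p (fun ω => (F ω, G ω)) ω * fiberMass p F ω else 0) ≤ fiberMass p H ω₁ :=
  calc _ = ∑ ω₂, p ω₂ * ∑ ω, (if G ω = G ω₁ ∧ F ω = F ω₂ then
          p ω / fiberMass p (fun ω => (F ω, G ω)) ω else 0) := by
        simp only [mul_sum]
        rw [sum_comm]
        refine sum_congr rfl fun ω _ => ?_
        by_cases h₁ : G ω = G ω₁
        · rw [if_pos h₁, fiberMass.eq_1 p F ω, mul_sum]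
          refine sum_congr rfl fun ω₂ _ => ?_
          by_cases h₂ : F ω₂ = F ω
          · simp [h₁, h₂, mul_comm]
          · simp [h₁, h₂, Ne.symm h₂]
        · simp [h₁]
    _ ≤ ∑ ω₂, p ω₂ * if H ω₂ = H ω₁ then 1 else 0 :=
        sum_le_sum fun ω₂ _ => mul_le_mul_of_nonneg_left
          (sum_ite_div_fiberMass_pair_le hF hG ω₁ ω₂) (hp ω₂)
    _ = fiberMass p H ω₁ := by simp [fiberMass]

theorem sum_mul_fiberMass_ratio_le_one (hp : ∀ ω, 0 ≤ p ω) (hp1 : ∑ ω, p ω = 1)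
    (hF : ∀ ω ω', F ω = F ω' → H ω = H ω') (hG : ∀ ω ω', G ω = G ω' → H ω = H ω') :
    ∑ ω, p ω * (fiberMass p F ω * fiberMass p G ω /
      (fiberMass p (fun ω => (F ω, G ω)) ω * fiberMass p H ω)) ≤ 1 :=
  calc _ = ∑ ω₁, p ω₁ / fiberMass p H ω₁ * ∑ ω, (if G ω = G ω₁ then
          p ω / fiberMass p (fun ω => (F ω, G ω)) ω * fiberMass p F ω else 0) := by
        simp only [mul_sum]
        rw [sum_comm]
        refine sum_congr rfl fun ω _ => ?_
        rw [fiberMass.eq_1 p G ω, mul_sum, sum_div, mul_sum]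
        refine sum_congr rfl fun ω₁ _ => ?_
        by_cases h : G ω₁ = G ω
        · rw [if_pos h, if_pos h.symm, fiberMass_eq_of_eq (hG _ _ h)]
          ring
        · simp [h, Ne.symm h]
    _ ≤ ∑ ω₁, p ω₁ / fiberMass p H ω₁ * fiberMass p H ω₁ :=
        sum_le_sum fun ω₁ _ => mul_le_mul_of_nonneg_left
          (sum_ite_mul_fiberMass_le hp hF hG ω₁) (div_nonneg (hp ω₁) (fiberMass_nonneg hp H _))
    _ ≤ ∑ ω₁, p ω₁ := sum_le_sum fun ω₁ _ => by
        rcases (fiberMass_nonneg hp H ω₁).eq_or_lt with h | h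
        · simp [← h, hp ω₁]
        · rw [div_mul_cancel₀ _ h.ne']
    _ = 1 := hp1

theorem mapEntropy_pair_add_le (hp : ∀ ω, 0 ≤ p ω) (hp1 : ∑ ω, p ω = 1)
    (hF : ∀ ω ω', F ω = F ω' → H ω = H ω') (hG : ∀ ω ω', G ω = G ω' → H ω = H ω') :
    mapEntropy p (fun ω => (F ω, G ω)) + mapEntropy p H ≤ mapEntropy p F + mapEntropy p G := by
  -- Gibbs: `Σ p log r ≤ Σ p (r - 1) ≤ 0` for the ratio `r` of `sum_mul_fiberMass_ratio_le_one`.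
  have hterm : ∀ ω, p ω * (log (fiberMass p F ω) + log (fiberMass p G ω) -
      (log (fiberMass p (fun ω => (F ω, G ω)) ω) + log (fiberMass p H ω))) ≤
      p ω * (fiberMass p F ω * fiberMass p G ω /
        (fiberMass p (fun ω => (F ω, G ω)) ω * fiberMass p H ω)) - p ω := by
    intro ω
    rcases eq_or_ne (p ω) 0 with h | h
    · simp [h]
    have h₁ := fiberMass_pos hp F h
    have h₂ := fiberMass_pos hp G h
    have h₃ := fiberMass_pos hp (fun ω => (F ω, G ω)) h
    have h₄ := fiberMass_pos hp H h
    rw [← mul_sub_one, ← log_mul h₁.ne' h₂.ne', ← log_mul h₃.ne' h₄.ne',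
      ← log_div (by positivity) (by positivity)]
    exact mul_le_mul_of_nonneg_left (log_le_sub_one_of_pos (by positivity)) (hp ω)
  have hsum := (sum_le_sum fun ω _ => hterm ω).trans_eq (by rw [sum_sub_distrib, hp1])
  have hgibbs := sum_mul_fiberMass_ratio_le_one hp hp1 hF hG
  simp only [mapEntropy]
  simp only [mul_sub, mul_add, sum_sub_distrib, sum_add_distrib] at hsum
  linarith

end MapEntropy

theorem sum_negMulLog_le_log_card {ι : Type*} (s : Finset ι) (w : ι → ℝ) (hw0 : ∀ i ∈ s, 0 ≤ w i)
    (hw1 : ∑ i ∈ s, w i = 1) : ∑ i ∈ s, negMulLog (w i) ≤ log #s := by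
  have hs : s.Nonempty := nonempty_of_sum_ne_zero (by rw [hw1]; exact one_ne_zero)
  have hn : (0 : ℝ) < #s := by exact_mod_cast hs.card_pos
  have hjensen := concaveOn_negMulLog.le_map_sum (t := s) (w := fun _ => (#s : ℝ)⁻¹) (p := w)
    (fun _ _ => by positivity) (by simp [hn.ne']) (fun i hi => Set.mem_Ici.2 (hw0 i hi))
  simp only [smul_eq_mul, ← mul_sum, hw1, mul_one, negMulLog, log_inv, neg_mul_neg] at hjensen
  exact le_of_mul_le_mul_left hjensen (inv_pos.2 hn)

theorem Finset.restrict_eq_restrict_iff {ι : Type*} {α : ι → Type*} {S : Finset ι}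
    {x y : ∀ i, α i} : S.restrict x = S.restrict y ↔ ∀ i ∈ S, x i = y i := by
  simp [funext_iff]

theorem Finset.restrict_eq_restrict_of_subset {ι : Type*} {α : ι → Type*} {S T : Finset ι}
    (hST : S ⊆ T) {x y : ∀ i, α i} (h : T.restrict x = T.restrict y) :
    S.restrict x = S.restrict y :=
  Finset.restrict_eq_restrict_iff.2 fun i hi => Finset.restrict_eq_restrict_iff.1 h i (hST hi)

section CoordinateEntropy

variable {V A : Type*} [Fintype V] [DecidableEq V] [Fintype A] [DecidableEq A]
  {p : (V → A) → ℝ} {s : ℕ}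

theorem marginalPMF_eq_sum_ite (p : (V → A) → ℝ) (S : Finset V) (y : S → A) :
    marginalPMF p S y = ∑ x, if S.restrict x = y then p x else 0 :=
  sum_congr rfl fun _ _ => if_congr funext_iff.symm rfl rfl

theorem Hent_eq_mapEntropy (s : ℕ) (p : (V → A) → ℝ) (S : Finset V) :
    Hent s p S = mapEntropy p S.restrict / log s := by
  simp only [Hent, marginalPMF_eq_sum_ite, sum_negMulLog_pushforward_eq_mapEntropy]

theorem sEntLike_Hent (hs : 1 < s) (hp : IsProbDist p) : SEntLike (Hent s p) := by
  have hlog : 0 ≤ log s := log_nonneg (by exact_mod_cast hs.le)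
  refine ⟨?_, fun S T hST => ?_, fun S T => ?_⟩ <;> simp only [Hent_eq_mapEntropy]
  · rw [mapEntropy_eq_zero_of_const hp.2 fun _ _ => Subsingleton.elim _ _, zero_div]
  · exact div_le_div_of_nonneg_right
      (mapEntropy_le_of_factor hp.1 fun _ _ => restrict_eq_restrict_of_subset hST) hlog
  · have hpair : mapEntropy p (S ∪ T).restrict =
        mapEntropy p fun x => (S.restrict x, T.restrict x) :=
      mapEntropy_congr fun x y => by
        simp only [Prod.ext_iff, Finset.restrict_eq_restrict_iff, mem_union, or_imp, forall_and]
    rw [hpair, ← add_div, ← add_div]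
    refine div_le_div_of_nonneg_right ?_ hlog
    rw [add_comm]
    exact mapEntropy_pair_add_le hp.1 hp.2
      (fun _ _ => restrict_eq_restrict_of_subset inter_subset_left)
      (fun _ _ => restrict_eq_restrict_of_subset inter_subset_right)

theorem Hent_le_card (hs : 1 < s) (hA : Fintype.card A = s) (hp : IsProbDist p) (S : Finset V) :
    Hent s p S ≤ #S := by
  have hsum : ∑ y : S → A, marginalPMF p S y = 1 := by
    simp only [marginalPMF_eq_sum_ite]
    rw [sum_comm]
    simpa using hp.2
  rw [Hent, div_le_iff₀ (log_pos (by exact_mod_cast hs))]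
  calc ∑ y : S → A, negMulLog (marginalPMF p S y)
      ≤ log #(univ : Finset (S → A)) :=
        sum_negMulLog_le_log_card univ _ (fun y _ => sum_nonneg fun x _ => by
          split_ifs <;> simp [hp.1 x]) hsum
    _ = #S * log s := by
        rw [card_univ, Fintype.card_fun, Fintype.card_coe, hA, Nat.cast_pow, log_pow]

theorem Hent_univ_eq (s : ℕ) (p : (V → A) → ℝ) :
    Hent s p univ = (∑ x, negMulLog (p x)) / log s := by
  rw [Hent_eq_mapEntropy, mapEntropy_congr (G := id) fun x y => by
    simp [funext_iff], mapEntropy_id]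

end CoordinateEntropy

def IsLocallyDetermined {V A : Type*} (E : V → V → Prop) (F : Set (V → A)) : Prop :=
  ∀ j, ∀ x ∈ F, ∀ y ∈ F, (∀ i, E i j → x i = y i) → x j = y j

theorem mem_inNbr {V : Type*} [Fintype V] {E : V → V → Prop} [DecidableRel E] {i j : V} :
    i ∈ inNbr E j ↔ E i j := by
  simp [inNbr]

noncomputable def strategyOf {V A : Type*} [Nonempty A] (E : V → V → Prop) (F : Set (V → A)) :
    V → (V → A) → A :=
  fun j x => (Classical.epsilon fun y => y ∈ F ∧ ∀ i, E i j → y i = x i) j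

theorem isStrategy_strategyOf {V A : Type*} [Nonempty A] {E : V → V → Prop} (F : Set (V → A)) :
    IsStrategy E (strategyOf E F) := by
  intro j x y hxy
  exact congrArg (fun P : (V → A) → Prop => Classical.epsilon P j) <| funext fun z =>
    propext (and_congr_right fun _ => forall₂_congr fun i hi => by rw [hxy i hi])

noncomputable def uniformOn {Ω : Type*} [DecidableEq Ω] (F : Finset Ω) (ω : Ω) : ℝ :=
  if ω ∈ F then (#F : ℝ)⁻¹ else 0

theorem uniformOn_ne_zero_iff {Ω : Type*} [DecidableEq Ω] {F : Finset Ω} (hF : F.Nonempty)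
    {ω : Ω} : uniformOn F ω ≠ 0 ↔ ω ∈ F := by
  by_cases h : ω ∈ F <;> simp [uniformOn, h, hF.card_pos.ne']

section Strategies

variable {V A : Type*} [Fintype V] [DecidableEq V] [Fintype A] [DecidableEq A]
  {E : V → V → Prop} {p : (V → A) → ℝ} {s : ℕ}

theorem infoConstraints_iff [DecidableRel E] (hs : 1 < s) (hp : IsProbDist p) :
    InfoConstraints E s p ↔ IsLocallyDetermined E {x | p x ≠ 0} := by
  have hlog : log s ≠ 0 := (log_pos (by exact_mod_cast hs)).ne'
  refine forall_congr' fun j => ?_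
  rw [sub_eq_zero, Hent_eq_mapEntropy, Hent_eq_mapEntropy, div_left_inj' hlog,
    mapEntropy_eq_iff_of_factor (F := (insert j (inNbr E j)).restrict) (H := (inNbr E j).restrict)
      hp.1 fun _ _ => restrict_eq_restrict_of_subset (subset_insert _ _)]
  simp only [Finset.restrict_eq_restrict_iff, forall_mem_insert, mem_inNbr, Set.mem_ofPred_eq]
  exact ⟨fun h x hx y hy hxy => (h x y hx hy hxy).1, fun h x y hx hy hxy => ⟨h x hx y hy hxy, hxy⟩⟩

theorem IsStrategy.isLocallyDetermined_correctSet {g : V → (V → A) → A} (hg : IsStrategy E g) :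
    IsLocallyDetermined E (correctSet g : Set (V → A)) := by
  intro j x hx y hy hxy
  simp only [correctSet, coe_filter, mem_univ, true_and, Set.mem_ofPred_eq] at hx hy
  rw [← hx j, ← hy j, hg j x y hxy]

theorem IsLocallyDetermined.subset_correctSet [Nonempty A] {F : Set (V → A)}
    (hF : IsLocallyDetermined E F) : F ⊆ correctSet (strategyOf E F) := by
  intro x hx
  simp only [correctSet, coe_filter, mem_univ, true_and, Set.mem_ofPred_eq]
  intro j
  obtain ⟨hy, hyx⟩ := Classical.epsilon_spec
    (p := fun y => y ∈ F ∧ ∀ i, E i j → y i = x i) ⟨x, hx, fun _ _ => rfl⟩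
  exact hF j _ hy x hx hyx

theorem isProbDist_uniformOn {F : Finset (V → A)} (hF : F.Nonempty) :
    IsProbDist (uniformOn F) :=
  ⟨fun x => by unfold uniformOn; split_ifs <;> positivity,
    by simp [uniformOn, sum_ite_mem, hF.card_pos.ne']⟩

theorem Hent_uniformOn {F : Finset (V → A)} (hF : F.Nonempty) (s : ℕ) :
    Hent s (uniformOn F) univ = logb s #F := by
  have hn : (#F : ℝ) ≠ 0 := by exact_mod_cast hF.card_pos.ne'
  rw [Hent_univ_eq, logb]
  congr 1
  simp only [uniformOn, apply_ite negMulLog, negMulLog_zero, sum_ite_mem, univ_inter, sum_const,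
    nsmul_eq_mul]
  rw [negMulLog, log_inv]
  field_simp

theorem Hent_univ_le_logb_card (hs : 1 < s) (hp : IsProbDist p) :
    Hent s p univ ≤ logb s #{x | p x ≠ 0} := by
  rw [Hent_univ_eq, logb]
  refine div_le_div_of_nonneg_right ?_ (log_nonneg (by exact_mod_cast hs.le))
  have hsupp : ∑ x with p x ≠ 0, negMulLog (p x) = ∑ x, negMulLog (p x) :=
    sum_filter_of_ne fun x _ h hx => h (by rw [hx, negMulLog_zero])
  rw [← hsupp]
  exact sum_negMulLog_le_log_card _ _ (fun x _ => hp.1 x) (by rw [sum_filter_ne_zero, hp.2])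

end Strategies

section MaxCorrect

variable {V : Type*} [Fintype V] [DecidableEq V] {E : V → V → Prop} [DecidableRel E] {s : ℕ}

theorem bddAbove_card_correctSet (E : V → V → Prop) (s : ℕ) :
    BddAbove {m | ∃ g : V → (V → Fin s) → Fin s, IsStrategy E g ∧ m = #(correctSet g)} := by
  refine ⟨s ^ Fintype.card V, ?_⟩
  rintro _ ⟨g, -, rfl⟩
  exact (card_le_univ _).trans_eq (by simp)

theorem IsLocallyDetermined.card_le_maxCorrect [NeZero s] {F : Finset (V → Fin s)}
    (hF : IsLocallyDetermined E (F : Set (V → Fin s))) : #F ≤ maxCorrect E s :=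
  (card_le_card (coe_subset.1 hF.subset_correctSet)).trans
    (le_csSup (bddAbove_card_correctSet E s) ⟨_, isStrategy_strategyOf _, rfl⟩)

theorem exists_isLocallyDetermined_card_eq_maxCorrect [NeZero s] :
    ∃ F : Finset (V → Fin s), IsLocallyDetermined E (F : Set (V → Fin s)) ∧
      #F = maxCorrect E s := by
  obtain ⟨g, hg, hmax⟩ := Nat.sSup_mem (s := {m | ∃ g : V → (V → Fin s) → Fin s,
    IsStrategy E g ∧ m = #(correctSet g)}) ⟨_, fun _ _ => 0, fun _ _ _ _ => rfl, rfl⟩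
    (bddAbove_card_correctSet E s)
  exact ⟨_, hg.isLocallyDetermined_correctSet, hmax.symm⟩

theorem one_le_maxCorrect [NeZero s] : 1 ≤ maxCorrect E s := by
  have hsingle : IsLocallyDetermined E (({fun _ => 0} : Finset (V → Fin s)) : Set (V → Fin s)) := by
    intro j x hx y hy _
    rw [mem_coe, mem_singleton] at hx hy
    rw [hx, hy]
  simpa using hsingle.card_le_maxCorrect

theorem isGreatest_graphEntropy (hs : 2 ≤ s) :
    IsGreatest {h | ∃ p : (V → Fin s) → ℝ, IsProbDist p ∧ InfoConstraints E s p ∧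
      h = Hent s p univ} (logb s (maxCorrect E s)) := by
  have : NeZero s := ⟨by omega⟩
  have hs' : 1 < s := hs
  obtain ⟨F, hF, hcard⟩ := exists_isLocallyDetermined_card_eq_maxCorrect (E := E) (s := s)
  have hFne : F.Nonempty := card_pos.1 (hcard ▸ one_le_maxCorrect)
  have hsuppF : {x | uniformOn F x ≠ 0} = (F : Set (V → Fin s)) :=
    Set.ext fun x => uniformOn_ne_zero_iff hFne
  refine ⟨⟨uniformOn F, isProbDist_uniformOn hFne,
    (infoConstraints_iff hs' (isProbDist_uniformOn hFne)).2 (hsuppF ▸ hF),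
    by rw [Hent_uniformOn hFne, hcard]⟩, ?_⟩
  rintro _ ⟨p, hp, hc, rfl⟩
  have hsupp : IsLocallyDetermined E (({x | p x ≠ 0} : Finset (V → Fin s)) : Set (V → Fin s)) := by
    simpa using (infoConstraints_iff hs' hp).1 hc
  obtain ⟨x, -, hx⟩ := exists_ne_zero_of_sum_ne_zero (s := univ) (f := p)
    (by rw [hp.2]; exact one_ne_zero)
  have hpos : 0 < #{x | p x ≠ 0} := card_pos.2 ⟨x, by simpa using hx⟩
  exact (Hent_univ_le_logb_card hs' hp).trans (logb_le_logb_of_le (by exact_mod_cast hs')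
    (by exact_mod_cast hpos) (by exact_mod_cast hsupp.card_le_maxCorrect))

theorem graphEntropy_eq_logb_maxCorrect (hs : 2 ≤ s) :
    graphEntropy E s = logb s (maxCorrect E s) :=
  (isGreatest_graphEntropy hs).csSup_eq

end MaxCorrect

section Polymatroid

variable {U : Type*} [DecidableEq U] {f : Finset U → ℝ}

theorem SEntLike.union_le_add (hf : SEntLike f) (X Y : Finset U) : f (X ∪ Y) ≤ f X + f Y := by
  have hsub := hf.2.2 X Y
  have hinter := hf.2.1 ∅ (X ∩ Y) (empty_subset _)
  linarith [hf.1]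

theorem SEntLike.insert_eq_of_subset (hf : SEntLike f) {j : U} {N X : Finset U}
    (hj : f (insert j N) = f N) (hNX : N ⊆ X) : f (insert j X) = f X := by
  have hsub := hf.2.2 (insert j N) X
  have hN : f N ≤ f (insert j N ∩ X) := hf.2.1 _ _ (subset_inter (subset_insert _ _) hNX)
  rw [insert_union, union_eq_right.2 hNX] at hsub
  exact le_antisymm (by linarith) (hf.2.1 _ _ (subset_insert _ _))

end Polymatroid

theorem SEntLike.apply_univ_le_of_pentagon {f : Finset (Fin 5) → ℝ} (hf : SEntLike f)
    (hsingle : ∀ j, f {j} ≤ 1) (hc : FConstraints E5 f) : f univ ≤ 5 / 2 := by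
  have close : ∀ j X Y, inNbr E5 j ⊆ X → insert j X = Y → f Y = f X :=
    fun j _ _ hX hY => hY ▸ hf.insert_eq_of_subset (hc j) hX
  have submod : ∀ X Y I U, X ∩ Y = I → X ∪ Y = U → f I + f U ≤ f X + f Y :=
    fun X Y _ _ hI hU => hI ▸ hU ▸ hf.2.2 X Y
  have subadd : ∀ X Y U, X ∪ Y = U → f U ≤ f X + f Y :=
    fun X Y _ hU => hU ▸ hf.union_le_add X Y
  -- `2 f V = f {0,1,2,4} + f {0,1,3} ≤ (f {1,4} + f {0,2} - f {0,1}) + (f {0,1} + f {3})`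
  have h₁ : f univ = f {0, 1, 2, 4} := close 3 _ _ (by decide) (by decide)
  have h₂ : f univ = f {0, 1, 2, 3} := close 4 _ _ (by decide) (by decide)
  have h₃ : f {0, 1, 2, 3} = f {0, 1, 3} := close 2 _ _ (by decide) (by decide)
  have h₄ : f {0, 1, 4} = f {1, 4} := close 0 _ _ (by decide) (by decide)
  have h₅ : f {0, 1, 2} = f {0, 2} := close 1 _ _ (by decide) (by decide)
  have s₁ := submod {0, 1, 4} {0, 1, 2} {0, 1} {0, 1, 2, 4} (by decide) (by decide)
  have s₂ := subadd {1} {4} {1, 4} (by decide)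
  have s₃ := subadd {0} {2} {0, 2} (by decide)
  have s₄ := subadd {0, 1} {3} {0, 1, 3} (by decide)
  linarith [hsingle 0, hsingle 1, hsingle 2, hsingle 3, hsingle 4]

theorem logb_le_div_two_iff {b x : ℝ} (hb : 1 < b) (hx : 0 < x) (n : ℕ) :
    logb b x ≤ n / 2 ↔ x ^ 2 ≤ b ^ n := by
  rw [← logb_le_logb hb (pow_pos hx 2) (pow_pos (zero_lt_one.trans hb) n), logb_pow, logb_pow,
    logb_self_eq_one hb]
  push_cast
  constructor <;> intro h <;> linarith

theorem logb_eq_div_two_iff {b x : ℝ} (hb : 1 < b) (hx : 0 < x) (n : ℕ) :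
    logb b x = n / 2 ↔ x ^ 2 = b ^ n := by
  rw [← (logb_injOn_pos hb).eq_iff (pow_pos hx 2) (pow_pos (zero_lt_one.trans hb) n), logb_pow,
    logb_pow, logb_self_eq_one hb]
  push_cast
  constructor <;> intro h <;> linarith

theorem exists_sq_of_sq_eq_pow_odd {s m k : ℕ} (h : m ^ 2 = s ^ (2 * k + 1)) :
    ∃ t, s = t ^ 2 := by
  rcases Nat.eq_zero_or_pos s with rfl | hs
  · exact ⟨0, rfl⟩
  obtain ⟨t, rfl⟩ : s ^ k ∣ m := (Nat.pow_dvd_pow_iff two_ne_zero).1 <| by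
    rw [h, ← pow_mul]
    exact pow_dvd_pow s (by omega)
  refine ⟨t, Nat.eq_of_mul_eq_mul_left (pow_pos hs (2 * k)) ?_⟩
  calc s ^ (2 * k) * s = (s ^ k * t) ^ 2 := by rw [h]; ring
    _ = s ^ (2 * k) * t ^ 2 := by ring

section Pentagon

variable {s : ℕ}

theorem Hent_univ_le_of_infoConstraints_pentagon (hs : 1 < s) {p : (Fin 5 → Fin s) → ℝ}
    (hp : IsProbDist p) (hc : InfoConstraints E5 s p) : Hent s p univ ≤ 5 / 2 :=
  (sEntLike_Hent hs hp).apply_univ_le_of_pentagon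
    (fun j => by simpa using Hent_le_card hs (Fintype.card_fin s) hp {j})
    (fun j => sub_eq_zero.1 (hc j))

theorem logb_maxCorrect_pentagon_le (hs : 2 ≤ s) : logb s (maxCorrect E5 s) ≤ 5 / 2 := by
  obtain ⟨p, hp, hc, heq⟩ := (isGreatest_graphEntropy (E := E5) hs).1
  rw [heq]
  exact Hent_univ_le_of_infoConstraints_pentagon hs hp hc

theorem maxCorrect_pentagon_sq_le (hs : 2 ≤ s) : maxCorrect E5 s ^ 2 ≤ s ^ 5 := by
  have : NeZero s := ⟨by omega⟩
  have h := logb_maxCorrect_pentagon_le hs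
  rw [show (5 / 2 : ℝ) = (5 : ℕ) / 2 by norm_num, logb_le_div_two_iff (by exact_mod_cast hs)
    (by exact_mod_cast one_le_maxCorrect)] at h
  exact_mod_cast h

theorem pow_five_le_maxCorrect_pentagon (t : ℕ) [NeZero t] : t ^ 5 ≤ maxCorrect E5 (t ^ 2) := by
  let e : Fin t × Fin t ≃ Fin (t ^ 2) := finProdFinEquiv.trans (finCongr (sq t).symm)
  let X : (Fin 5 → Fin t) → Fin 5 → Fin (t ^ 2) := fun a j => e (a (j - 1), a j)
  have hX : Function.Injective X := fun a b h =>
    funext fun j => (Prod.ext_iff.1 (e.injective (congrFun h j))).2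
  have hnbr : ∀ j : Fin 5, E5 (j + 1) j ∧ E5 (j - 1) j := by decide
  have hdet : IsLocallyDetermined E5 ((univ.image X : Finset _) : Set (Fin 5 → Fin (t ^ 2))) := by
    intro j x hx y hy hxy
    simp only [coe_image, coe_univ, Set.image_univ, Set.mem_range] at hx hy
    obtain ⟨a, rfl⟩ := hx
    obtain ⟨b, rfl⟩ := hy
    have h₁ := Prod.ext_iff.1 (e.injective (hxy _ (hnbr j).1))
    have h₂ := Prod.ext_iff.1 (e.injective (hxy _ (hnbr j).2))
    simp only [X, add_sub_cancel_right] at h₁ h₂ ⊢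
    rw [h₁.1, h₂.2]
  simpa [card_image_of_injective _ hX] using hdet.card_le_maxCorrect

end Pentagon

/-- For every integer `s ≥ 2`, the entropy `E(C5,s)` of the bidirected
pentagon equals `5/2` iff `s` is a perfect square; consequently `E(C5) = 5/2`. -/
theorem pentagon_entropy_eq_iff_square :
    (∀ s : ℕ, 2 ≤ s → (graphEntropy E5 s = 5 / 2 ↔ ∃ t : ℕ, s = t ^ 2))
    ∧ genEntropy E5 = 5 / 2 := by
  have hsq : ∀ s : ℕ, 2 ≤ s → (graphEntropy E5 s = 5 / 2 ↔ maxCorrect E5 s ^ 2 = s ^ 5) := by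
    intro s hs
    have : NeZero s := ⟨by omega⟩
    rw [graphEntropy_eq_logb_maxCorrect hs, show (5 / 2 : ℝ) = (5 : ℕ) / 2 by norm_num,
      logb_eq_div_two_iff (by exact_mod_cast hs) (by exact_mod_cast one_le_maxCorrect)]
    exact_mod_cast Iff.rfl
  have key : ∀ s : ℕ, 2 ≤ s → (graphEntropy E5 s = 5 / 2 ↔ ∃ t : ℕ, s = t ^ 2) := by
    intro s hs
    rw [hsq s hs]
    refine ⟨exists_sq_of_sq_eq_pow_odd (k := 2), ?_⟩
    rintro ⟨t, rfl⟩
    have : NeZero t := ⟨by rintro rfl; norm_num at hs⟩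
    refine le_antisymm (maxCorrect_pentagon_sq_le hs) ?_
    calc (t ^ 2) ^ 5 = (t ^ 5) ^ 2 := by ring
      _ ≤ maxCorrect E5 (t ^ 2) ^ 2 := Nat.pow_le_pow_left (pow_five_le_maxCorrect_pentagon t) 2
  refine ⟨key, IsGreatest.csSup_eq ⟨⟨4, by norm_num, ((key 4 (by norm_num)).2 ⟨2, rfl⟩).symm⟩, ?_⟩⟩
  rintro _ ⟨s, hs, rfl⟩
  rw [graphEntropy_eq_logb_maxCorrect hs]
  exact logb_maxCorrect_pentagon_le hs
end

section
/- The entropy of the bidirected pentagon C5 over an alphabet of two letters equals log_2(5): E(C5,2) = log_2 5. -/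
open Finset

/-!
If `p` satisfies the information constraints, then on the support of `p` each coordinate `x j`
is a function of the coordinates on `N⁻(j)`: by strict subadditivity of `negMulLog`,
`H(j | N⁻(j)) = 0` forces every fiber of the marginal on `N⁻(j)` to carry a single value of `x j`.
So the support is an independent set of the confusion graph, where `x` and `y` are adjacent when
some vertex sees the same in-neighbour values in both but holds different values itself. Entropy
is at most the logarithm of the support size, with equality for the uniform distribution, hence
`E(G,s) = log_s α` with `α` the independence number of the confusion graph over `Fin s`.

For the pentagon over two letters `α = 5`: the five rotations of `11010` are pairwise
non-confusable, and since confusability is invariant under translation in `Fin 5 → Fin 2`,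
a sixth codeword is ruled out by a finite search among codes containing `0`.
-/

open Real

section NegMulLog

variable {ι : Type*} {t : Finset ι} {a : ι → ℝ}

lemma sum_negMulLog_sub_negMulLog_sum (t : Finset ι) (a : ι → ℝ) :
    ∑ i ∈ t, negMulLog (a i) - negMulLog (∑ i ∈ t, a i)
      = ∑ i ∈ t, a i * (log (∑ k ∈ t, a k) - log (a i)) := by
  simp only [negMulLog, neg_mul, mul_sub, sum_sub_distrib, sum_neg_distrib, ← sum_mul]
  ring

lemma mul_log_sum_sub_log_nonneg (ha : ∀ i ∈ t, 0 ≤ a i) {i : ι} (hi : i ∈ t) :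
    0 ≤ a i * (log (∑ k ∈ t, a k) - log (a i)) := by
  rcases (ha i hi).eq_or_lt with h | h
  · simp [← h]
  · exact mul_nonneg h.le (sub_nonneg.2 (log_le_log h (single_le_sum ha hi)))

lemma negMulLog_sum_le (ha : ∀ i ∈ t, 0 ≤ a i) :
    negMulLog (∑ i ∈ t, a i) ≤ ∑ i ∈ t, negMulLog (a i) := by
  have := sum_nonneg fun i hi => mul_log_sum_sub_log_nonneg ha hi
  linarith [sum_negMulLog_sub_negMulLog_sum t a]

lemma negMulLog_sum_eq_iff (ha : ∀ i ∈ t, 0 ≤ a i) :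
    negMulLog (∑ i ∈ t, a i) = ∑ i ∈ t, negMulLog (a i) ↔
      ∀ i ∈ t, ∀ k ∈ t, a i ≠ 0 → a k ≠ 0 → i = k := by
  constructor
  · intro heq i hi k hk hai hak
    by_contra hik
    have hpos : 0 < a i := (ha i hi).lt_of_ne' hai
    have hlt : a i < ∑ l ∈ t, a l :=
      lt_of_lt_of_le (lt_add_of_pos_right _ ((ha k hk).lt_of_ne' hak)) (add_le_sum ha hi hk hik)
    have : 0 < ∑ i ∈ t, a i * (log (∑ k ∈ t, a k) - log (a i)) :=
      sum_pos' (fun _ => mul_log_sum_sub_log_nonneg ha)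
        ⟨i, hi, mul_pos hpos (sub_pos.2 (log_lt_log hpos hlt))⟩
    linarith [sum_negMulLog_sub_negMulLog_sum t a]
  · intro huniq
    by_cases h : ∃ i ∈ t, a i ≠ 0
    · obtain ⟨i, hi, hai⟩ := h
      have hrest : ∀ k ∈ t, k ≠ i → a k = 0 := fun k hk hki =>
        by_contra fun hak => hki (huniq k hk i hi hak hai)
      rw [sum_eq_single_of_mem i hi hrest,
        sum_eq_single_of_mem i hi fun k hk hki => by rw [hrest k hk hki, negMulLog_zero]]
    · push Not at h
      rw [sum_eq_zero h, sum_eq_zero fun i hi => by rw [h i hi, negMulLog_zero], negMulLog_zero]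

lemma negMulLog_inv (x : ℝ) : negMulLog x⁻¹ = x⁻¹ * log x := by
  simp [negMulLog, log_inv]

end NegMulLog

section Fibers

variable {X Y : Type*} [Fintype X] [DecidableEq Y] {p : X → ℝ}

lemma support_sum_fiber (hp : ∀ x, 0 ≤ p x) (f : X → Y) :
    Function.support (fun y => ∑ x with f x = y, p x) = f '' Function.support p := by
  ext y
  simp [sum_eq_zero_iff_of_nonneg fun x _ => hp x, and_comm]

variable [Fintype Y]

lemma sum_negMulLog_sum_fiber_eq_iff (hp : ∀ x, 0 ≤ p x) (f : X → Y) :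
    ∑ y, negMulLog (∑ x with f x = y, p x) = ∑ x, negMulLog (p x) ↔
      Set.InjOn f (Function.support p) := by
  rw [← sum_fiberwise univ f, sum_eq_sum_iff_of_le fun y _ => negMulLog_sum_le fun x _ => hp x]
  simp only [mem_univ, forall_const, mem_filter, true_and,
    fun y => negMulLog_sum_eq_iff (t := {x | f x = y}) fun x _ => hp x]
  constructor
  · intro h x hx x' hx' hxx'
    exact h _ x rfl x' hxx'.symm hx hx'
  · rintro h y x rfl x' hx' hx hx''
    exact h hx hx'' hx'.symm

lemma sum_fiber_comp {Z : Type*} [DecidableEq Z] (f : X → Y) (g : Y → Z) (z : Z) :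
    ∑ x with g (f x) = z, p x = ∑ y with g y = z, ∑ x with f x = y, p x := by
  rw [← sum_fiberwise _ f, sum_filter]
  refine sum_congr rfl fun y _ => ?_
  split_ifs with hy
  · rw [filter_filter]
    exact sum_congr (filter_congr fun x _ => ⟨And.right, fun h => ⟨h ▸ hy, h⟩⟩) fun _ _ => rfl
  · refine sum_eq_zero fun x hx => absurd ?_ hy
    simp only [mem_filter, mem_univ, true_and] at hx
    exact hx.2 ▸ hx.1

end Fibers

section Entropy

variable {V A : Type*} [Fintype V] [DecidableEq V] [Fintype A] [DecidableEq A]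
  {s : ℕ} {p : (V → A) → ℝ}

lemma marginalPMF_eq_sum_fiber (p : (V → A) → ℝ) (S : Finset V) (y : S → A) :
    marginalPMF p S y = ∑ x with S.restrict x = y, p x := by
  rw [marginalPMF, sum_filter]
  simp only [funext_iff, Finset.restrict]

lemma Hent_eq_sum_fiber (s : ℕ) (p : (V → A) → ℝ) (S : Finset V) :
    Hent s p S = (∑ y, negMulLog (∑ x with S.restrict x = y, p x)) / log s := by
  simp only [Hent, marginalPMF_eq_sum_fiber]

lemma Hent_univ (hp : ∀ x, 0 ≤ p x) : Hent s p univ = (∑ x, negMulLog (p x)) / log s := by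
  rw [Hent_eq_sum_fiber, (sum_negMulLog_sum_fiber_eq_iff hp _).2]
  exact fun x _ y _ h => funext fun i => congr_fun h ⟨i, mem_univ i⟩

lemma Hent_eq_Hent_iff (hs : 1 < s) (hp : ∀ x, 0 ≤ p x) {N M : Finset V} (hNM : N ⊆ M) :
    Hent s p M = Hent s p N ↔ ∀ x ∈ Function.support p, ∀ y ∈ Function.support p,
      (∀ i ∈ N, x i = y i) → ∀ i ∈ M, x i = y i := by
  have hlog : log s ≠ 0 := (log_pos (by exact_mod_cast hs)).ne'
  set q : (M → A) → ℝ := fun y => ∑ x with M.restrict x = y, p x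
  have hq : ∀ y, 0 ≤ q y := fun y => sum_nonneg fun x _ => hp x
  have hN : Hent s p N =
      (∑ z, negMulLog (∑ y with @restrict₂ V (fun _ => A) N M hNM y = z, q y)) / log s := by
    simp only [Hent_eq_sum_fiber, q, ← sum_fiber_comp, ← restrict₂_comp_restrict hNM]
    rfl
  rw [Hent_eq_sum_fiber, hN, div_left_inj' hlog, eq_comm, sum_negMulLog_sum_fiber_eq_iff hq,
    support_sum_fiber hp]
  constructor
  · intro h x hx y hy hxy i hi
    exact congr_fun (h ⟨x, hx, rfl⟩ ⟨y, hy, rfl⟩ (funext fun i => hxy i i.2)) ⟨i, hi⟩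
  · rintro h _ ⟨x, hx, rfl⟩ _ ⟨y, hy, rfl⟩ hxy
    exact funext fun i => h x hx y hy (fun j hj => congr_fun hxy ⟨j, hj⟩) i i.2

end Entropy

section Support

variable {X : Type*} [Fintype X] {p : X → ℝ}

lemma sum_negMulLog_le_log_of_card_support_le (hp : ∀ x, 0 ≤ p x) (hp1 : ∑ x, p x = 1)
    {n : ℕ} (hn : #{x | p x ≠ 0} ≤ n) : ∑ x, negMulLog (p x) ≤ log n := by
  classical
  set S : Finset X := {x | p x ≠ 0}
  have hoff : ∀ x ∉ S, p x = 0 := fun x hx => by simpa [S] using hx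
  have hS : ∑ x ∈ S, p x = 1 := by
    rw [← hp1, sum_subset (subset_univ S) fun x _ hx => hoff x hx]
  have hcard : (0 : ℝ) < #S := by
    exact_mod_cast card_pos.2 (nonempty_of_sum_ne_zero (hS ▸ one_ne_zero))
  rw [← sum_subset (subset_univ S) fun x _ hx => by rw [hoff x hx, negMulLog_zero]]
  have := concaveOn_negMulLog.le_map_sum (t := S) (w := fun _ => (#S : ℝ)⁻¹) (p := p)
    (fun _ _ => by positivity) (by simp [hcard.ne']) fun x _ => Set.mem_Ici.2 (hp x)
  simp only [smul_eq_mul, ← mul_sum, hS, mul_one] at this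
  rw [negMulLog_inv, mul_le_mul_iff_right₀ (inv_pos.2 hcard)] at this
  exact this.trans (log_le_log hcard (by exact_mod_cast hn))

end Support

section Uniform

variable {X : Type*} [DecidableEq X]

noncomputable def uniformWeight (t : Finset X) (x : X) : ℝ := if x ∈ t then (#t : ℝ)⁻¹ else 0

lemma uniformWeight_nonneg (t : Finset X) (x : X) : 0 ≤ uniformWeight t x := by
  unfold uniformWeight; split_ifs <;> positivity

lemma support_uniformWeight (t : Finset X) : Function.support (uniformWeight t) = t := by
  ext x
  by_cases hx : x ∈ t
  · simp [uniformWeight, hx, card_ne_zero_of_mem hx]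
  · simp [uniformWeight, hx]

variable [Fintype X]

lemma sum_uniformWeight {t : Finset X} (ht : t.Nonempty) : ∑ x, uniformWeight t x = 1 := by
  simp [uniformWeight, sum_ite_mem, ht.card_ne_zero]

lemma sum_negMulLog_uniformWeight (t : Finset X) :
    ∑ x, negMulLog (uniformWeight t x) = log #t := by
  have h : ∀ x, negMulLog (uniformWeight t x) = if x ∈ t then negMulLog (#t : ℝ)⁻¹ else 0 := by
    intro x
    unfold uniformWeight
    split_ifs <;> simp
  rw [sum_congr rfl fun x _ => h x, sum_ite_mem, univ_inter, sum_const, nsmul_eq_mul,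
    negMulLog_inv]
  rcases t.eq_empty_or_nonempty with rfl | ht
  · simp
  · field_simp [ht.card_ne_zero]

end Uniform

open SimpleGraph

def confusionGraph {V : Type*} (E : V → V → Prop) (A : Type*) : SimpleGraph (V → A) where
  Adj x y := ∃ j, (∀ i, E i j → x i = y i) ∧ x j ≠ y j
  symm := ⟨fun _ _ ⟨j, hN, hj⟩ => ⟨j, fun i hi => (hN i hi).symm, hj.symm⟩⟩
  loopless := ⟨fun _ ⟨_, _, hj⟩ => hj rfl⟩

instance {V A : Type*} [Fintype V] [DecidableEq A] (E : V → V → Prop) [DecidableRel E] :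
    DecidableRel (confusionGraph E A).Adj :=
  fun x y => inferInstanceAs (Decidable (∃ j, (∀ i, E i j → x i = y i) ∧ x j ≠ y j))

lemma confusionGraph_adj_sub_right {V A : Type*} [AddGroup A] {E : V → V → Prop}
    {x y : V → A} (z : V → A) :
    (confusionGraph E A).Adj (x - z) (y - z) ↔ (confusionGraph E A).Adj x y := by
  simp [confusionGraph]

section GraphEntropy

variable {V A : Type*} [Fintype V] [DecidableEq V] [Fintype A] [DecidableEq A]
  {E : V → V → Prop} [DecidableRel E] {s : ℕ} {p : (V → A) → ℝ}

lemma infoConstraints_iff_isIndepSet (hs : 1 < s) (hp : ∀ x, 0 ≤ p x) :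
    InfoConstraints E s p ↔ (confusionGraph E A).IsIndepSet (Function.support p) := by
  simp only [InfoConstraints, sub_eq_zero, Hent_eq_Hent_iff hs hp (subset_insert _ _),
    forall_mem_insert, inNbr, mem_filter, mem_univ, true_and]
  constructor
  · rintro h x hx y hy - ⟨j, hN, hj⟩
    exact hj (h j x hx y hy hN).1
  · intro h j x hx y hy hN
    refine ⟨?_, hN⟩
    by_contra hj
    exact h hx hy (fun hxy => hj (hxy ▸ rfl)) ⟨j, hN, hj⟩

end GraphEntropy

theorem graphEntropy_eq_logb_indepNum {V : Type*} [Fintype V] [DecidableEq V]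
    (E : V → V → Prop) [DecidableRel E] {s : ℕ} (hs : 1 < s) :
    graphEntropy E s = logb s (confusionGraph E (Fin s)).indepNum := by
  obtain ⟨t, ht⟩ := (confusionGraph E (Fin s)).exists_isNIndepSet_indepNum
  have hne : t.Nonempty := by
    rw [← card_pos, ht.card_eq]
    exact Nat.lt_of_succ_le <| by
      simpa using IsIndepSet.card_le_indepNum (G := confusionGraph E (Fin s))
        (t := {fun _ => ⟨0, by omega⟩}) (by simp)
  refine IsGreatest.csSup_eq ⟨⟨uniformWeight t, ⟨uniformWeight_nonneg t, sum_uniformWeight hne⟩,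
    ?_, ?_⟩, ?_⟩
  · rw [infoConstraints_iff_isIndepSet hs (uniformWeight_nonneg t), support_uniformWeight]
    exact ht.isIndepSet
  · rw [Hent_univ (uniformWeight_nonneg t), sum_negMulLog_uniformWeight, ht.card_eq, logb]
  · rintro _ ⟨p, ⟨hp, hp1⟩, hc, rfl⟩
    have hind := (infoConstraints_iff_isIndepSet hs hp).1 hc
    rw [Hent_univ hp, logb]
    refine div_le_div_of_nonneg_right (sum_negMulLog_le_log_of_card_support_le hp hp1 ?_)
      (log_nonneg (by exact_mod_cast hs.le))
    exact IsIndepSet.card_le_indepNum (by simpa [Function.support] using hind)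

def pentagonCode : Finset (Fin 5 → Fin 2) :=
  {![1, 1, 0, 1, 0], ![0, 1, 1, 0, 1], ![1, 0, 1, 1, 0], ![0, 1, 0, 1, 1], ![1, 0, 1, 0, 1]}

lemma isIndepSet_pentagonCode : (confusionGraph E5 (Fin 2)).IsIndepSet pentagonCode := by
  have h : ∀ x ∈ pentagonCode, ∀ y ∈ pentagonCode, ¬ (confusionGraph E5 (Fin 2)).Adj x y := by
    decide
  exact fun x hx y hy _ => h x hx y hy

local notation "Compatible" => SimpleGraph.Adj (confusionGraph E5 (Fin 2))ᶜ

-- Nested so that `decide` abandons a partial choice as soon as one pair is incompatible.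
set_option synthInstance.maxSize 2000 in
set_option maxRecDepth 100000 in
lemma no_compatible_sextuple_through_zero :
    ∀ a, Compatible a 0 → ∀ b, Compatible b 0 → Compatible b a →
    ∀ c, Compatible c 0 → Compatible c a → Compatible c b →
    ∀ d, Compatible d 0 → Compatible d a → Compatible d b → Compatible d c →
    ∀ e, Compatible e 0 → Compatible e a → Compatible e b → Compatible e c →
      ¬ Compatible e d := by
  decide

lemma card_le_five_of_isIndepSet {t : Finset (Fin 5 → Fin 2)}
    (ht : (confusionGraph E5 (Fin 2)).IsIndepSet t) : #t ≤ 5 := by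
  by_contra! h
  obtain ⟨f, hf⟩ := Function.Embedding.exists_of_card_le_finset (α := Fin 6)
    (by rw [Fintype.card_fin]; exact h)
  set g : Fin 6 → Fin 5 → Fin 2 := fun i => f i - f 0
  have hg : ∀ i j, j < i → Compatible (g i) (g j) := by
    intro i j hij
    have hne : f i ≠ f j := f.injective.ne hij.ne'
    rw [compl_adj, Ne, sub_left_inj, confusionGraph_adj_sub_right]
    exact ⟨hne, ht (hf ⟨i, rfl⟩) (hf ⟨j, rfl⟩) hne⟩
  have h0 : g 0 = 0 := sub_self _
  have hg0 : ∀ i, 0 < i → Compatible (g i) 0 := fun i hi => h0 ▸ hg i 0 hi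
  exact no_compatible_sextuple_through_zero _ (hg0 1 (by decide)) _ (hg0 2 (by decide))
    (hg 2 1 (by decide)) _ (hg0 3 (by decide)) (hg 3 1 (by decide)) (hg 3 2 (by decide))
    _ (hg0 4 (by decide)) (hg 4 1 (by decide)) (hg 4 2 (by decide)) (hg 4 3 (by decide))
    _ (hg0 5 (by decide)) (hg 5 1 (by decide)) (hg 5 2 (by decide)) (hg 5 3 (by decide))
    (hg 5 4 (by decide))

lemma indepNum_confusionGraph_pentagon : (confusionGraph E5 (Fin 2)).indepNum = 5 := by
  obtain ⟨t, ht⟩ := (confusionGraph E5 (Fin 2)).exists_isNIndepSet_indepNum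
  refine le_antisymm (ht.card_eq ▸ card_le_five_of_isIndepSet ht.isIndepSet) ?_
  have hcard : #pentagonCode = 5 := by decide
  exact hcard.ge.trans isIndepSet_pentagonCode.card_le_indepNum

/-- The entropy of the bidirected pentagon over a two-letter alphabet
equals `log_2 5`. -/
theorem pentagon_entropy_two_letters : graphEntropy E5 2 = Real.logb 2 5 := by
  rw [graphEntropy_eq_logb_indepNum E5 one_lt_two, indepNum_confusionGraph_pentagon]
  norm_num
end
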